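/- Let U : Hilbr → Set preserve directed colimits, and suppose U(f) = U(g) for all parallel pairs f, g : A → B with dim(A) = λ, for some infinite cardinal λ. Then U(f) = U(g) for all parallel pairs f, g : A → B with dim(A) ≥ λ. -/

import Mathlib

open CategoryTheory CategoryTheory.Limits

/-- The category `Hilbr` of Hilbert spaces over `𝕜` (`ℝ` or `ℂ`) and linear isometric
embeddings. -/
structure HilbCat (𝕜 : Type) [RCLike 𝕜] : Type 1 where
  carrier : Type
  [nacg : NormedAddCommGroup carrier]
  [ips : InnerProductSpace 𝕜 carrier]
  [cs : CompleteSpace carrier]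

attribute [instance] HilbCat.nacg HilbCat.ips HilbCat.cs

variable {𝕜 : Type} [RCLike 𝕜]

instance : Category (HilbCat 𝕜) where
  Hom A B := A.carrier →ₗᵢ[𝕜] B.carrier
  id A := LinearIsometry.id
  comp f g := g.comp f
  id_comp f := rfl
  comp_id f := rfl
  assoc f g h := rfl

/-- View a morphism of `HilbCat` as a linear isometry. -/
def homFn {A B : HilbCat 𝕜} (f : A ⟶ B) : A.carrier →ₗᵢ[𝕜] B.carrier := f

/-- View a linear isometry as a morphism of `HilbCat`. -/
def toHom {A B : HilbCat 𝕜} (f : A.carrier →ₗᵢ[𝕜] B.carrier) : A ⟶ B := f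

/-- A functor preserves directed colimits if it preserves colimits of shape `J` for every
nonempty directed preorder `J`. -/
def PreservesDirectedColimits {C : Type*} [Category C] (U : C ⥤ Type) : Prop :=
  ∀ (J : Type) [Preorder J] [IsDirected J (· ≤ ·)] [Nonempty J],
    Nonempty (PreservesColimitsOfShape J U)

/-- `x ∈ U(A)` is supported on the subspace `A₀ ⊆ A` if any two morphisms out of `A`
agreeing on `A₀` are equalized by `x`. -/
def SuppOn (U : HilbCat 𝕜 ⥤ Type) (A : HilbCat 𝕜) (A₀ : Submodule 𝕜 A.carrier)
    (x : U.obj A) : Prop :=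
  ∀ (B : HilbCat 𝕜) (f g : A ⟶ B), (∀ a ∈ A₀, homFn f a = homFn g a) →
    U.map f x = U.map g x

/-- The Hilbert space `ℓ²(X)` as an object of `HilbCat`. -/
noncomputable def lpObj (𝕜 : Type) [RCLike 𝕜] (X : Type) : HilbCat 𝕜 :=
  ⟨lp (fun _ : X => 𝕜) 2⟩

/-- `A` has Hilbert dimension `c`: it admits an orthonormal (Hilbert) basis indexed by a type
of cardinality `c`. -/
def HasHilbertDim (A : HilbCat 𝕜) (c : Cardinal) : Prop :=
  ∃ (ι : Type) (_ : HilbertBasis ι 𝕜 A.carrier), Cardinal.mk ι = c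

/-- `A` has Hilbert dimension `≥ c`. -/
def HasHilbertDimGE (A : HilbCat 𝕜) (c : Cardinal) : Prop :=
  ∃ (ι : Type) (_ : HilbertBasis ι 𝕜 A.carrier), c ≤ Cardinal.mk ι

/-!
Given a Hilbert basis `b : ι → A` with `λ ≤ #ι`, the space `A` is the colimit of the closed spans
of `b '' s` over the subsets `s ⊆ ι` of cardinality `λ`; these form a directed system because `λ`
is infinite, and each of them has Hilbert dimension `λ`. As `U` preserves this colimit, `U` sends
the inclusions of these spans to jointly epimorphic maps, and by hypothesis `U(f)` and `U(g)` agree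
after composing with each of them.
-/

open Submodule Set

namespace LinearIsometry

section Glue

variable {R E F : Type*} [Ring R] [SeminormedAddCommGroup E] [Module R E]
  [SeminormedAddCommGroup F] [Module R F] {J : Type*} [Nonempty J]
  (K : J → Submodule R E) (hK : Directed (· ≤ ·) K) (φ : ∀ j, K j →ₗᵢ[R] F)
  (hφ : ∀ i j x (hi : x ∈ K i) (hj : x ∈ K j), φ i ⟨x, hi⟩ = φ j ⟨x, hj⟩)

noncomputable def iSupLift : (⨆ j, K j : Submodule R E) →ₗᵢ[R] F :=
  have apply_of_mem := fun (x : (⨆ j, K j : Submodule R E)) {j : J} (hx : (x : E) ∈ K j) =>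
    Set.iUnionLift_of_mem (S := fun j => (K j : Set E)) (f := fun j x => φ j x)
      (hf := hφ) (hT := (coe_iSup_of_directed K hK).le) x hx
  { toFun := Set.iUnionLift (fun j => (K j : Set E)) (fun j x => φ j x)
      hφ _ (coe_iSup_of_directed K hK).le
    map_add' := fun x y => by
      obtain ⟨i, hx⟩ := (mem_iSup_of_directed K hK).1 x.2
      obtain ⟨j, hy⟩ := (mem_iSup_of_directed K hK).1 y.2
      obtain ⟨k, hik, hjk⟩ := hK i j
      rw [apply_of_mem x (hik hx), apply_of_mem y (hjk hy),
        apply_of_mem (x + y) (add_mem (hik hx) (hjk hy))]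
      exact (φ k).map_add ⟨x, hik hx⟩ ⟨y, hjk hy⟩
    map_smul' := fun c x => by
      obtain ⟨i, hx⟩ := (mem_iSup_of_directed K hK).1 x.2
      rw [RingHom.id_apply, apply_of_mem x hx, apply_of_mem (c • x) (smul_mem _ c hx)]
      exact (φ i).map_smul c ⟨x, hx⟩
    norm_map' := fun x => by
      obtain ⟨i, hx⟩ := (mem_iSup_of_directed K hK).1 x.2
      exact (congrArg norm (apply_of_mem x hx)).trans ((φ i).norm_map ⟨x, hx⟩) }

theorem iSupLift_of_mem (x : (⨆ j, K j : Submodule R E)) {j : J} (hx : (x : E) ∈ K j) :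
    iSupLift K hK φ hφ x = φ j ⟨x, hx⟩ :=
  Set.iUnionLift_of_mem (S := fun j => (K j : Set E)) (f := fun j x => φ j x)
    (hf := hφ) (hT := (coe_iSup_of_directed K hK).le) x hx

end Glue

section Extend

variable {R E F : Type*} [NormedField R] [SeminormedAddCommGroup E] [NormedSpace R E]
  [NormedAddCommGroup F] [NormedSpace R F] [CompleteSpace F]
  {D : Submodule R E} (hD : Dense (D : Set E)) (φ : D →ₗᵢ[R] F)

noncomputable def extendOfDense : E →ₗᵢ[R] F :=
  let ψ := φ.toContinuousLinearMap.extend D.subtypeL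
  have hψ : ∀ x : D, ψ x = φ x := ContinuousLinearMap.extend_eq _ hD.denseRange_val
    isUniformEmbedding_subtype_val.isUniformInducing
  { ψ.toLinearMap with
    norm_map' := fun x => congrFun (hD.denseRange_val.equalizer ψ.continuous.norm continuous_norm
      (funext fun y => (congrArg norm (hψ y)).trans (φ.norm_map y))) x }

theorem extendOfDense_apply (x : D) : extendOfDense hD φ x = φ x :=
  ContinuousLinearMap.extend_eq _ hD.denseRange_val
    isUniformEmbedding_subtype_val.isUniformInducing x

end Extend

end LinearIsometry

namespace HilbCat

variable {A : HilbCat 𝕜} {J : Type} [Preorder J] (K : J → Submodule 𝕜 A.carrier)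
  [∀ j, CompleteSpace (K j)] (hK : Monotone K)

noncomputable def subspaceDiagram : J ⥤ HilbCat 𝕜 where
  obj j := ⟨K j⟩
  map f := toHom ⟨Submodule.inclusion (hK (leOfHom f)), fun _ => rfl⟩

noncomputable def subspaceCocone : Cocone (subspaceDiagram K hK) where
  pt := A
  ι := { app := fun j => toHom (K j).subtypeₗᵢ }

variable [IsDirected J (· ≤ ·)]

theorem cocone_app_eq_of_mem (t : Cocone (subspaceDiagram K hK))
    (i j : J) (x : A.carrier) (hi : x ∈ K i) (hj : x ∈ K j) :
    homFn (t.ι.app i) ⟨x, hi⟩ = homFn (t.ι.app j) ⟨x, hj⟩ := by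
  obtain ⟨k, hik, hjk⟩ := directed_of (· ≤ ·) i j
  rw [← t.w (homOfLE hik), ← t.w (homOfLE hjk)]
  rfl

variable [Nonempty J] (hdense : Dense ((⨆ j, K j : Submodule 𝕜 A.carrier) : Set A.carrier))

noncomputable def subspaceCoconeDesc (t : Cocone (subspaceDiagram K hK)) :
    A.carrier →ₗᵢ[𝕜] t.pt.carrier :=
  LinearIsometry.extendOfDense hdense <|
    LinearIsometry.iSupLift K hK.directed_le (fun j => homFn (t.ι.app j))
      (cocone_app_eq_of_mem K hK t)

theorem subspaceCoconeDesc_of_mem (t : Cocone (subspaceDiagram K hK))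
    (x : A.carrier) {j : J} (hx : x ∈ K j) :
    subspaceCoconeDesc K hK hdense t x = homFn (t.ι.app j) ⟨x, hx⟩ :=
  (LinearIsometry.extendOfDense_apply hdense _ ⟨x, le_iSup K j hx⟩).trans
    (LinearIsometry.iSupLift_of_mem _ _ _ _ _ hx)

noncomputable def subspaceCoconeIsColimit : IsColimit (subspaceCocone K hK) where
  desc t := toHom (subspaceCoconeDesc K hK hdense t)
  fac t j := LinearIsometry.ext fun x => subspaceCoconeDesc_of_mem K hK hdense t x.1 x.2
  uniq t m hm := LinearIsometry.ext <| congrFun <|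
    hdense.denseRange_val.equalizer (homFn m).continuous
      (subspaceCoconeDesc K hK hdense t).continuous <| funext fun x => by
        obtain ⟨j, hj⟩ := (mem_iSup_of_directed K hK.directed_le).1 x.2
        have hmj :=
          congrArg (fun f : (subspaceDiagram K hK).obj j ⟶ t.pt => homFn f ⟨x, hj⟩) (hm j)
        exact hmj.trans (subspaceCoconeDesc_of_mem K hK hdense t x hj).symm

end HilbCat

noncomputable def Orthonormal.hilbertBasisClosureSpan {E ι : Type*} [NormedAddCommGroup E]
    [InnerProductSpace 𝕜 E] [CompleteSpace E] {v : ι → E} (hv : Orthonormal 𝕜 v) :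
    HilbertBasis ι 𝕜 (span 𝕜 (range v)).topologicalClosure :=
  HilbertBasis.mk
    (hv.codRestrict _ fun i => le_topologicalClosure _ (subset_span (mem_range_self i))) <| by
    rw [top_le_iff, ← dense_iff_topologicalClosure_eq_top, Subtype.dense_iff,
      ← coe_subtype, ← map_coe, map_span, ← range_comp]
    exact subset_rfl

namespace HilbertBasis

variable {E ι : Type*} [NormedAddCommGroup E] [InnerProductSpace 𝕜 E]
  (b : HilbertBasis ι 𝕜 E)

noncomputable abbrev closedSpan (s : Set ι) : Submodule 𝕜 E :=
  (span 𝕜 (range fun i : s => b i)).topologicalClosure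

theorem closedSpan_mono : Monotone b.closedSpan := fun _ _ hst =>
  topologicalClosure_mono <| span_mono <| range_subset_iff.2 fun i => ⟨⟨i, hst i.2⟩, rfl⟩

noncomputable def restrict [CompleteSpace E] (s : Set ι) : HilbertBasis s 𝕜 (b.closedSpan s) :=
  (b.orthonormal.comp _ Subtype.val_injective).hilbertBasisClosureSpan

theorem dense_iSup_closedSpan {J : Type*} (S : J → Set ι) (hS : ∀ i, ∃ j, i ∈ S j) :
    Dense ((⨆ j, b.closedSpan (S j) : Submodule 𝕜 E) : Set E) := by
  refine (dense_iff_topologicalClosure_eq_top.2 b.dense_span).mono ?_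
  refine span_le.2 (range_subset_iff.2 fun i => ?_)
  obtain ⟨j, hj⟩ := hS i
  exact le_iSup (fun j => b.closedSpan (S j)) j
    (le_topologicalClosure _ (subset_span ⟨⟨i, hj⟩, rfl⟩))

end HilbertBasis

namespace Cardinal

theorem mk_union_eq_of_le {α : Type*} {s t : Set α} {c : Cardinal} (hc : ℵ₀ ≤ c)
    (hs : #s = c) (ht : #t ≤ c) : #(s ∪ t : Set α) = c :=
  le_antisymm ((mk_union_le s t).trans (add_le_of_le hc hs.le ht))
    (hs ▸ mk_le_mk_of_subset subset_union_left)

end Cardinal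

section SetsOfCard

open Cardinal

variable {ι : Type} {c : Cardinal}

abbrev SetsOfCard (ι : Type) (c : Cardinal) : Type := {s : Set ι // #s = c}

theorem SetsOfCard.nonempty (hc : c ≤ #ι) : Nonempty (SetsOfCard ι c) :=
  let ⟨s, hs⟩ := le_mk_iff_exists_set.1 hc
  ⟨⟨s, hs⟩⟩

theorem SetsOfCard.isDirected (hc : ℵ₀ ≤ c) : IsDirected (SetsOfCard ι c) (· ≤ ·) :=
  ⟨fun s t => ⟨⟨s.1 ∪ t.1, mk_union_eq_of_le hc s.2 t.2.le⟩,
    subset_union_left, subset_union_right⟩⟩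

theorem SetsOfCard.exists_mem (hc : ℵ₀ ≤ c) (s : SetsOfCard ι c) (i : ι) :
    ∃ t : SetsOfCard ι c, i ∈ t.1 :=
  ⟨⟨s.1 ∪ {i}, mk_union_eq_of_le hc s.2 (by simpa using one_le_aleph0.trans hc)⟩,
    mem_union_right _ rfl⟩

end SetsOfCard

/-- If `U(f) = U(g)` for all parallel pairs with `dim A = λ`, then the same holds for all
parallel pairs with `dim A ≥ λ`. -/
theorem stmt_13 (U : HilbCat 𝕜 ⥤ Type) (hU : PreservesDirectedColimits U)
    (lam : Cardinal) (hlam : Cardinal.aleph0 ≤ lam)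
    (h : ∀ (A B : HilbCat 𝕜) (f g : A ⟶ B), HasHilbertDim A lam → U.map f = U.map g) :
    ∀ (A B : HilbCat 𝕜) (f g : A ⟶ B), HasHilbertDimGE A lam → U.map f = U.map g := by
  rintro A B f g ⟨ι, b, hge⟩
  have := SetsOfCard.nonempty hge
  have := SetsOfCard.isDirected (ι := ι) hlam
  obtain ⟨_⟩ := hU (SetsOfCard ι lam)
  let K (s : SetsOfCard ι lam) := b.closedSpan s.1
  have hK : Monotone K := fun _ _ hst => b.closedSpan_mono hst
  let c := HilbCat.subspaceCocone K hK
  have hc : IsColimit (U.mapCocone c) :=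
    isColimitOfPreserves U <| HilbCat.subspaceCoconeIsColimit K hK <|
      b.dense_iSup_closedSpan _ (SetsOfCard.exists_mem hlam (Classical.arbitrary _))
  refine hc.hom_ext fun s => (U.map_comp _ f).symm.trans ?_ |>.trans (U.map_comp _ g)
  exact h ⟨K s⟩ B _ _ ⟨s.1, b.restrict s.1, s.2⟩
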